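/- arXiv:2410.13188 — 2 statements merged into one kernel-verified Lean document; each statement's English description precedes it below -/
import Mathlib

section
/- Let V be a finite-dimensional real inner product space and fix μ₁, μ₂ ∈ Λ²V* ⊗ V. Define δ_μ(A) = ψ(A)μ = A(μ(·,·)) − μ(A·,·) − μ(·,A·). Then for all A, B ∈ End(V): ⟨δ_{μ₁}(A*), δ_{μ₂}(B*)⟩ = ⟨δ_{μ₁}(B), δ_{μ₂}(A)⟩ + ⟨μ₁, δ_{μ₂}([A,B*])⟩, where A*, B* are adjoints and [A,B*] = AB* − B*A. -/
open scoped RealInnerProductSpace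

/-- `ψ(A)μ (v,w) = A(μ(v,w)) - μ(Av,w) - μ(v,Aw)`. -/
def psiMap {V : Type*} [AddCommGroup V] [Module ℝ V]
    (A : V →ₗ[ℝ] V) (μ : V → V → V) : V → V → V :=
  fun v w => A (μ v w) - μ (A v) w - μ v (A w)

/-- `μ` is an alternating bilinear map, i.e. an element of `Λ²V* ⊗ V`. -/
def IsAltBil {V : Type*} [AddCommGroup V] [Module ℝ V] (μ : V → V → V) : Prop :=
  (∀ (a : ℝ) (v w : V), μ (a • v) w = a • μ v w) ∧
  (∀ v₁ v₂ w : V, μ (v₁ + v₂) w = μ v₁ w + μ v₂ w) ∧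
  (∀ (a : ℝ) (v w : V), μ v (a • w) = a • μ v w) ∧
  (∀ v w₁ w₂ : V, μ v (w₁ + w₂) = μ v w₁ + μ v w₂) ∧
  (∀ v : V, μ v v = 0)

/-- The induced inner product on `Λ²V* ⊗ V`: half the sum over all ordered pairs of
orthonormal basis vectors. -/
noncomputable def bilInner {V : Type*} [NormedAddCommGroup V] [InnerProductSpace ℝ V]
    {m : ℕ} (b : OrthonormalBasis (Fin m) ℝ V) (μ ν : V → V → V) : ℝ :=
  (1/2) * ∑ i, ∑ j, ⟪μ (b i) (b j), ν (b i) (b j)⟫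

/-- Bilinearity (without the alternating condition). -/
def IsBil {V : Type*} [AddCommGroup V] [Module ℝ V] (μ : V → V → V) : Prop :=
  (∀ (a : ℝ) (v w : V), μ (a • v) w = a • μ v w) ∧
  (∀ v₁ v₂ w : V, μ (v₁ + v₂) w = μ v₁ w + μ v₂ w) ∧
  (∀ (a : ℝ) (v w : V), μ v (a • w) = a • μ v w) ∧
  (∀ v w₁ w₂ : V, μ v (w₁ + w₂) = μ v w₁ + μ v w₂)

lemma IsAltBil.isBil {V : Type*} [AddCommGroup V] [Module ℝ V] {μ : V → V → V}
    (h : IsAltBil μ) : IsBil μ := ⟨h.1, h.2.1, h.2.2.1, h.2.2.2.1⟩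

section plain
variable {V : Type*} [AddCommGroup V] [Module ℝ V]

lemma IsBil.sub₁ {μ : V → V → V} (h : IsBil μ) (x y w : V) :
    μ (x - y) w = μ x w - μ y w := by
  have := h.2.1 x ((-1 : ℝ) • y) w
  have h2 := h.1 (-1 : ℝ) y w
  rw [neg_one_smul] at this h2
  simpa [sub_eq_add_neg, h2] using this

lemma IsBil.sub₂ {μ : V → V → V} (h : IsBil μ) (v x y : V) :
    μ v (x - y) = μ v x - μ v y := by
  have := h.2.2.2 v x ((-1 : ℝ) • y)
  have h2 := h.2.2.1 (-1 : ℝ) v y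
  rw [neg_one_smul] at this h2
  simpa [sub_eq_add_neg, h2] using this

/-- The left slot as a linear map. -/
def leftLM {μ : V → V → V} (h : IsBil μ) (w : V) : V →ₗ[ℝ] V where
  toFun := fun v => μ v w
  map_add' := fun a c => h.2.1 a c w
  map_smul' := fun a v => h.1 a v w

/-- The right slot as a linear map. -/
def rightLM {μ : V → V → V} (h : IsBil μ) (v : V) : V →ₗ[ℝ] V where
  toFun := fun w => μ v w
  map_add' := fun a c => h.2.2.2 v a c
  map_smul' := fun a w => h.2.2.1 a v w

lemma IsBil.psiMap {μ : V → V → V} (h : IsBil μ) (A : V →ₗ[ℝ] V) :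
    IsBil (psiMap A μ) := by
  obtain ⟨hs1, ha1, hs2, ha2⟩ := h
  refine ⟨fun a v w => ?_, fun v₁ v₂ w => ?_, fun a v w => ?_, fun v w₁ w₂ => ?_⟩ <;>
    simp only [_root_.psiMap, map_smul, map_add, hs1, ha1, hs2, ha2, smul_sub] <;> abel

lemma psi_comm (A C : V →ₗ[ℝ] V) {μ : V → V → V} (h : IsBil μ) (v w : V) :
    psiMap A (psiMap C μ) v w
      = psiMap C (psiMap A μ) v w + psiMap (A ∘ₗ C - C ∘ₗ A) μ v w := by
  simp only [psiMap, LinearMap.sub_apply, LinearMap.comp_apply, map_sub,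
    h.sub₁, h.sub₂]
  abel

end plain

section ip
variable {V : Type*} [NormedAddCommGroup V] [InnerProductSpace ℝ V]
  {m : ℕ}

lemma left_expand {μ : V → V → V} (h : IsBil μ) (b : OrthonormalBasis (Fin m) ℝ V)
    (x w : V) : μ x w = ∑ k, ⟪x, b k⟫ • μ (b k) w := by
  have : μ x w = leftLM h w (∑ k, b.repr x k • b k) := by
    rw [b.sum_repr x]; rfl
  rw [this, map_sum]
  simp [leftLM, b.repr_apply_apply, real_inner_comm]

lemma right_expand {μ : V → V → V} (h : IsBil μ) (b : OrthonormalBasis (Fin m) ℝ V)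
    (v x : V) : μ v x = ∑ k, ⟪x, b k⟫ • μ v (b k) := by
  have : μ v x = rightLM h v (∑ k, b.repr x k • b k) := by
    rw [b.sum_repr x]; rfl
  rw [this, map_sum]
  simp [rightLM, b.repr_apply_apply, real_inner_comm]

lemma swap23 (f : Fin m → Fin m → Fin m → ℝ) :
    ∑ i, ∑ j, ∑ k, f i j k = ∑ i, ∑ k, ∑ j, f i j k :=
  Finset.sum_congr rfl fun i _ => Finset.sum_comm

lemma swap13 (f : Fin m → Fin m → Fin m → ℝ) :
    ∑ i, ∑ j, ∑ k, f i j k = ∑ k, ∑ j, ∑ i, f i j k := by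
  rw [swap23, Finset.sum_comm]
  exact Finset.sum_congr rfl fun k _ => Finset.sum_comm

lemma adj_sum [FiniteDimensional ℝ V] (b : OrthonormalBasis (Fin m) ℝ V)
    (A : V →ₗ[ℝ] V) {μ ν : V → V → V} (hμ : IsBil μ) (hν : IsBil ν) :
    ∑ i, ∑ j, ⟪psiMap (LinearMap.adjoint A) μ (b i) (b j), ν (b i) (b j)⟫
      = ∑ i, ∑ j, ⟪μ (b i) (b j), psiMap A ν (b i) (b j)⟫ := by
  simp only [psiMap, inner_sub_left, inner_sub_right, Finset.sum_sub_distrib]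
  congr 1
  congr 1
  · -- Σ ⟪A† μij, νij⟫ = Σ ⟪μij, A νij⟫
    exact Finset.sum_congr rfl fun i _ => Finset.sum_congr rfl fun j _ =>
      LinearMap.adjoint_inner_left A _ _
  · -- Σ ⟪μ(A† bi, bj), νij⟫ = Σ ⟪μij, ν(A bi, bj)⟫
    have lhs : ∀ i j, ⟪μ (LinearMap.adjoint A (b i)) (b j), ν (b i) (b j)⟫
        = ∑ k, ⟪b i, A (b k)⟫ * ⟪μ (b k) (b j), ν (b i) (b j)⟫ := by
      intro i j
      rw [left_expand hμ b (LinearMap.adjoint A (b i)) (b j), sum_inner]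
      refine Finset.sum_congr rfl fun k _ => ?_
      rw [real_inner_smul_left, LinearMap.adjoint_inner_left]
    have rhs : ∀ i j, ⟪μ (b i) (b j), ν (A (b i)) (b j)⟫
        = ∑ k, ⟪A (b i), b k⟫ * ⟪μ (b i) (b j), ν (b k) (b j)⟫ := by
      intro i j
      rw [left_expand hν b (A (b i)) (b j), inner_sum]
      refine Finset.sum_congr rfl fun k _ => ?_
      rw [real_inner_smul_right]
    simp only [lhs, rhs]
    rw [swap13]
    refine Finset.sum_congr rfl fun i _ => Finset.sum_congr rfl fun j _ =>
      Finset.sum_congr rfl fun k _ => ?_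
    rw [real_inner_comm (b k) (A (b i))]
  · -- second slot
    have lhs : ∀ i j, ⟪μ (b i) (LinearMap.adjoint A (b j)), ν (b i) (b j)⟫
        = ∑ k, ⟪b j, A (b k)⟫ * ⟪μ (b i) (b k), ν (b i) (b j)⟫ := by
      intro i j
      rw [right_expand hμ b (b i) (LinearMap.adjoint A (b j)), sum_inner]
      refine Finset.sum_congr rfl fun k _ => ?_
      rw [real_inner_smul_left, LinearMap.adjoint_inner_left]
    have rhs : ∀ i j, ⟪μ (b i) (b j), ν (b i) (A (b j))⟫
        = ∑ k, ⟪A (b j), b k⟫ * ⟪μ (b i) (b j), ν (b i) (b k)⟫ := by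
      intro i j
      rw [right_expand hν b (b i) (A (b j)), inner_sum]
      refine Finset.sum_congr rfl fun k _ => ?_
      rw [real_inner_smul_right]
    simp only [lhs, rhs]
    refine Finset.sum_congr rfl fun i _ => ?_
    rw [Finset.sum_comm]
    refine Finset.sum_congr rfl fun j _ => Finset.sum_congr rfl fun k _ => ?_
    rw [real_inner_comm (b k) (A (b j))]

end ip

theorem stmt2 {V : Type*} [NormedAddCommGroup V] [InnerProductSpace ℝ V]
    [FiniteDimensional ℝ V] {m : ℕ} (b : OrthonormalBasis (Fin m) ℝ V)
    (A B : V →ₗ[ℝ] V) (μ₁ μ₂ : V → V → V) (h₁ : IsAltBil μ₁) (h₂ : IsAltBil μ₂) :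
    bilInner b (psiMap (LinearMap.adjoint A) μ₁) (psiMap (LinearMap.adjoint B) μ₂)
      = bilInner b (psiMap B μ₁) (psiMap A μ₂)
        + bilInner b μ₁
            (psiMap (A ∘ₗ LinearMap.adjoint B - LinearMap.adjoint B ∘ₗ A) μ₂) := by
  have hb1 := h₁.isBil
  have hb2 := h₂.isBil
  have hψB : IsBil (psiMap (LinearMap.adjoint B) μ₂) := hb2.psiMap _
  have hψA : IsBil (psiMap A μ₂) := hb2.psiMap _
  unfold bilInner
  rw [adj_sum b A hb1 hψB]
  have key : ∀ i j : Fin m,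
      ⟪μ₁ (b i) (b j), psiMap A (psiMap (LinearMap.adjoint B) μ₂) (b i) (b j)⟫
        = ⟪μ₁ (b i) (b j), psiMap (LinearMap.adjoint B) (psiMap A μ₂) (b i) (b j)⟫
          + ⟪μ₁ (b i) (b j),
              psiMap (A ∘ₗ LinearMap.adjoint B - LinearMap.adjoint B ∘ₗ A) μ₂ (b i) (b j)⟫ := by
    intro i j
    rw [psi_comm A (LinearMap.adjoint B) hb2, inner_add_right]
  simp only [key, Finset.sum_add_distrib]
  have h2 := adj_sum b (LinearMap.adjoint B) hb1 hψA
  rw [LinearMap.adjoint_adjoint] at h2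
  rw [← h2]
  ring
end

section
/- Let G be a 2×2 real symmetric positive-definite matrix-valued function on an open interval U ⊆ ℝ containing 0, with G(0) = I, satisfying: det G(s) = 1, G'' = G' G⁻¹ G', and (1/2)tr(G⁻¹G' G⁻¹G') constant on U. Then G(s) = exp(sX) for a symmetric traceless 2×2 matrix X, and the constant equals (1/2)tr X². -/
/-!
As `det G = 1`, `G` is invertible and `(G⁻¹ G')' = -G⁻¹ G' G⁻¹ G' + G⁻¹ G''`, which vanishes
by the equation; hence `G' = G X` with `X = G'(0)`. Then `G(s) exp(-sX)` has zero derivative,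
so it equals its value `1` at `0`. `X` is symmetric because `G` is, and trace-free because
`(det G)'(0) = tr G'(0)` when `G(0) = 1`; evaluating the conserved quantity at `0` gives `k`.
-/

open Matrix Filter Topology

section BanachAlgebra

variable {R : Type*} [NormedRing R] [NormedAlgebra ℝ R] [CompleteSpace R]

theorem HasDerivAt.ringInverse {G : ℝ → R} {G' : R} {s : ℝ} (hG : HasDerivAt G G' s)
    (hu : IsUnit (G s)) :
    HasDerivAt (fun u => Ring.inverse (G u))
      (-(Ring.inverse (G s) * G' * Ring.inverse (G s))) s := by
  obtain ⟨x, hx⟩ := hu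
  have hinv := hasFDerivAt_ringInverse (𝕜 := ℝ) x
  rw [hx] at hinv
  rw [← hx, Ring.inverse_unit]
  exact hinv.comp_hasDerivAt s hG

/-- `G'' = G' G⁻¹ G'` is the geodesic equation of the affine-invariant metric. -/
theorem inverse_mul_deriv_eq_of_geodesic {U : Set ℝ} (hU : IsOpen U) (hU' : IsPreconnected U)
    {G G' G'' : ℝ → R} (hG : ∀ s ∈ U, HasDerivAt G (G' s) s)
    (hG' : ∀ s ∈ U, HasDerivAt G' (G'' s) s) (hunit : ∀ s ∈ U, IsUnit (G s))
    (hode : ∀ s ∈ U, G'' s = G' s * Ring.inverse (G s) * G' s) {s t : ℝ} (hs : s ∈ U)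
    (ht : t ∈ U) : Ring.inverse (G s) * G' s = Ring.inverse (G t) * G' t := by
  have hderiv : ∀ u ∈ U, HasDerivAt (fun u => Ring.inverse (G u) * G' u) 0 u := by
    intro u hu
    convert ((hG u hu).ringInverse (hunit u hu)).fun_mul (hG' u hu) using 1
    rw [hode u hu]
    noncomm_ring
  exact hU.is_const_of_deriv_eq_zero hU'
    (fun u hu => (hderiv u hu).differentiableAt.differentiableWithinAt)
    (fun u hu => (hderiv u hu).deriv) hs ht

theorem eq_exp_smul_of_hasDerivAt_mul_const {U : Set ℝ} (hU : IsOpen U) (hU' : IsPreconnected U)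
    (h0U : (0 : ℝ) ∈ U) {G : ℝ → R} {X : R} (hG : ∀ s ∈ U, HasDerivAt G (G s * X) s)
    (h0 : G 0 = 1) {s : ℝ} (hs : s ∈ U) : G s = NormedSpace.exp (s • X) := by
  have hderiv : ∀ u ∈ U, HasDerivAt (fun u => G u * NormedSpace.exp (u • -X)) 0 u := by
    intro u hu
    convert (hG u hu).fun_mul (hasDerivAt_exp_smul_const' (𝕂 := ℝ) (-X) u) using 1
    noncomm_ring
  have hconst : G s * NormedSpace.exp (s • -X) = 1 := by
    simpa [h0] using hU.is_const_of_deriv_eq_zero hU'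
      (fun u hu => (hderiv u hu).differentiableAt.differentiableWithinAt)
      (fun u hu => (hderiv u hu).deriv) hs h0U
  have hinv : NormedSpace.exp (s • -X) * NormedSpace.exp (s • X) = 1 := by
    -- `exp_add_of_commute` is stated for normed `ℚ`-algebras
    let : NormedAlgebra ℚ R := NormedAlgebra.restrictScalars ℚ ℝ R
    rw [smul_neg, ← NormedSpace.exp_add_of_commute (Commute.refl (s • X)).neg_left,
      neg_add_cancel, NormedSpace.exp_zero]
  calc G s = G s * NormedSpace.exp (s • -X) * NormedSpace.exp (s • X) := by
        rw [mul_assoc, hinv, mul_one]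
    _ = NormedSpace.exp (s • X) := by rw [hconst, one_mul]

end BanachAlgebra

namespace Matrix

section Operator

-- Any norm inducing the product topology would do; this one makes matrices a Banach algebra.
open scoped Matrix.Norms.Operator

variable {m n : Type*} [Fintype m] [Fintype n]

theorem hasDerivAt_iff_forall_hasDerivAt_apply {F : ℝ → Matrix m n ℝ} {F' : Matrix m n ℝ}
    {s : ℝ} : HasDerivAt F F' s ↔ ∀ i j, HasDerivAt (fun u => F u i j) (F' i j) s := by
  let e : (m → n → ℝ) ≃L[ℝ] Matrix m n ℝ :=
    (Matrix.ofLinearEquiv ℝ).toContinuousLinearEquiv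
  have hpi : HasDerivAt F F' s ↔
      HasDerivAt (fun u i j => F u i j : ℝ → m → n → ℝ) (fun i j => F' i j) s :=
    ⟨fun h => e.symm.hasFDerivAt.comp_hasDerivAt s h,
      fun h => e.hasFDerivAt.comp_hasDerivAt s h⟩
  simp_rw [hpi, hasDerivAt_pi]

theorem eq_exp_smul_of_geodesic [DecidableEq m] {U : Set ℝ} (hU : IsOpen U)
    (hU' : IsPreconnected U) (h0U : (0 : ℝ) ∈ U) {G G' G'' : ℝ → Matrix m m ℝ}
    (hG : ∀ s ∈ U, ∀ i j, HasDerivAt (fun u => G u i j) (G' s i j) s)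
    (hG' : ∀ s ∈ U, ∀ i j, HasDerivAt (fun u => G' u i j) (G'' s i j) s)
    (hdet : ∀ s ∈ U, IsUnit (G s).det) (hode : ∀ s ∈ U, G'' s = G' s * (G s)⁻¹ * G' s)
    (h0 : G 0 = 1) {s : ℝ} (hs : s ∈ U) : G s = NormedSpace.exp (s • G' 0) := by
  have hunit : ∀ s ∈ U, IsUnit (G s) := fun s hs => (isUnit_iff_isUnit_det _).2 (hdet s hs)
  have hderiv : ∀ s ∈ U, HasDerivAt G (G s * G' 0) s := by
    intro s hs
    have hlog := inverse_mul_deriv_eq_of_geodesic hU hU'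
      (fun s hs => hasDerivAt_iff_forall_hasDerivAt_apply.2 (hG s hs))
      (fun s hs => hasDerivAt_iff_forall_hasDerivAt_apply.2 (hG' s hs)) hunit
      (fun s hs => by rw [hode s hs, nonsing_inv_eq_ringInverse]) hs h0U
    rw [h0, Ring.inverse_one, one_mul] at hlog
    rw [← hlog, Ring.mul_inverse_cancel_left _ _ (hunit s hs)]
    exact hasDerivAt_iff_forall_hasDerivAt_apply.2 (hG s hs)
  exact eq_exp_smul_of_hasDerivAt_mul_const hU hU' h0U hderiv h0 hs

end Operator

variable {m : Type*}

theorem isSymm_of_hasDerivAt_apply {G : ℝ → Matrix m m ℝ} {X : Matrix m m ℝ} {s : ℝ}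
    (hG : ∀ i j, HasDerivAt (fun u => G u i j) (X i j) s)
    (hsymm : ∀ᶠ u in 𝓝 s, (G u).IsSymm) :
    X.IsSymm := by
  ext i j
  refine (hG j i).unique ((hG i j).congr_of_eventuallyEq ?_)
  filter_upwards [hsymm] with u hu
  exact hu.apply i j

theorem trace_eq_zero_of_hasDerivAt_apply_of_det_eq_one {G : ℝ → Matrix (Fin 2) (Fin 2) ℝ}
    {X : Matrix (Fin 2) (Fin 2) ℝ} (hG : ∀ i j, HasDerivAt (fun u => G u i j) (X i j) 0)
    (h0 : G 0 = 1) (hdet : ∀ᶠ u in 𝓝 0, (G u).det = 1) : X.trace = 0 := by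
  have hderiv : HasDerivAt (fun u => (G u).det) X.trace 0 := by
    simp only [det_fin_two, trace_fin_two]
    refine (((hG 0 0).fun_mul (hG 1 1)).fun_sub ((hG 0 1).fun_mul (hG 1 0))).congr_deriv ?_
    simp [h0]
  exact hderiv.unique ((hasDerivAt_const 0 1).congr_of_eventuallyEq hdet)

end Matrix

theorem stmt19 (a b : ℝ) (ha : a < 0) (hb : 0 < b)
    (G G' G'' : ℝ → Matrix (Fin 2) (Fin 2) ℝ) (k : ℝ)
    (hd1 : ∀ s ∈ Set.Ioo a b, ∀ i j : Fin 2, HasDerivAt (fun u => G u i j) (G' s i j) s)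
    (hd2 : ∀ s ∈ Set.Ioo a b, ∀ i j : Fin 2, HasDerivAt (fun u => G' u i j) (G'' s i j) s)
    (hpd : ∀ s ∈ Set.Ioo a b, (G s).PosDef)
    (h0 : G 0 = 1)
    (hdet : ∀ s ∈ Set.Ioo a b, (G s).det = 1)
    (hode : ∀ s ∈ Set.Ioo a b, G'' s = G' s * (G s)⁻¹ * G' s)
    (hk : ∀ s ∈ Set.Ioo a b,
      (1/2) * Matrix.trace ((G s)⁻¹ * G' s * (G s)⁻¹ * G' s) = k) :
    ∃ X : Matrix (Fin 2) (Fin 2) ℝ, X.IsSymm ∧ X.trace = 0 ∧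
      (∀ s ∈ Set.Ioo a b, G s = NormedSpace.exp (s • X)) ∧
      k = (1/2) * Matrix.trace (X * X) := by
  have h0I : (0 : ℝ) ∈ Set.Ioo a b := ⟨ha, hb⟩
  have hnhds : ∀ᶠ u in 𝓝 0, u ∈ Set.Ioo a b := isOpen_Ioo.mem_nhds h0I
  refine ⟨G' 0, ?_, ?_, fun s hs => ?_, ?_⟩
  · exact isSymm_of_hasDerivAt_apply (hd1 0 h0I)
      (hnhds.mono fun u hu => (hpd u hu).isHermitian)
  · exact trace_eq_zero_of_hasDerivAt_apply_of_det_eq_one (hd1 0 h0I) h0 (hnhds.mono hdet)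
  · exact eq_exp_smul_of_geodesic isOpen_Ioo isPreconnected_Ioo h0I hd1 hd2
      (fun s hs => by simp [hdet s hs]) hode h0 hs
  · simpa [h0] using (hk 0 h0I).symm
end
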